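/- arXiv:0910.3831 — 4 statements merged into one kernel-verified Lean document; each statement's English description precedes it below -/
import Mathlib

section
/- Let A be a (not necessarily commutative) algebra and let I₁,…,Iₙ be two-sided ideals in A satisfying the condition that for every k, ⋂_{j<k}(I_j + I_k) = (⋂_{j<k} I_j) + I_k. If elements a₁,…,aₙ ∈ A satisfy a_i ≡ a_j (mod I_i + I_j) for all i, j, then there exists a ∈ A such that a ≡ a_i (mod I_i) for every i. -/
/-- Chinese-remainder-type lemma for two-sided ideals of a (not necessarily
commutative) ring satisfying the Kazuo-Masuda condition (KM):
`⋂_{j<k} (I_j + I_k) = (⋂_{j<k} I_j) + I_k` for every `k`.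
If `a_i ≡ a_j (mod I_i + I_j)` for all `i, j`, then there is a single `a`
with `a ≡ a_i (mod I_i)` for all `i`. -/
theorem stmt_0 {A : Type*} [Ring A] (n : ℕ) (I : Fin n → TwoSidedIdeal A)
    (hKM : ∀ k : Fin n,
      (⨅ j : {j : Fin n // j < k}, (I j.1 ⊔ I k)) =
        (⨅ j : {j : Fin n // j < k}, I j.1) ⊔ I k)
    (a : Fin n → A) (ha : ∀ i j : Fin n, a i - a j ∈ I i ⊔ I j) :
    ∃ b : A, ∀ i : Fin n, b - a i ∈ I i := by
  suffices h : ∀ m : ℕ, m ≤ n → ∃ b : A, ∀ i : Fin n, i.1 < m → b - a i ∈ I i by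
    obtain ⟨b, hb⟩ := h n le_rfl
    exact ⟨b, fun i => hb i i.2⟩
  intro m
  induction m with
  | zero => exact fun _ => ⟨0, fun i hi => absurd hi (Nat.not_lt_zero _)⟩
  | succ m ih =>
    intro hm
    obtain ⟨b, hb⟩ := ih (Nat.le_of_succ_le hm)
    set k : Fin n := ⟨m, hm⟩
    have hmem : b - a k ∈ (⨅ j : {j : Fin n // j < k}, I j.1) ⊔ I k := by
      rw [← hKM k]
      rw [TwoSidedIdeal.mem_iInf]
      intro j
      have : b - a k = (b - a j.1) + (a j.1 - a k) := by abel
      rw [this]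
      exact TwoSidedIdeal.add_mem _
        (TwoSidedIdeal.mem_sup_left (hb j.1 j.2))
        (ha j.1 k)
    obtain ⟨x, hx, y, hy, hxy⟩ := TwoSidedIdeal.mem_sup.mp hmem
    refine ⟨b - x, fun i hi => ?_⟩
    rcases Nat.lt_succ_iff_lt_or_eq.mp hi with h | h
    · have : b - x - a i = (b - a i) - x := by abel
      rw [this]
      rw [TwoSidedIdeal.mem_iInf] at hx
      exact TwoSidedIdeal.sub_mem _ (hb i h) (hx ⟨i, h⟩)
    · have hik : i = k := Fin.ext h
      rw [hik]
      have : b - x - a k = y := by rw [eq_sub_of_add_eq' hxy]; abel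
      rw [this]
      exact hy
end

section
/- Let Λ be the exterior algebra over ℝ on generators σ₁,…,σ_L (L finite). If elements A₁,…,A_L ∈ Λ satisfy σ_j·A_i + σ_i·A_j = 0 for all i, j ∈ {1,…,L}, then there exists F ∈ Λ such that A_i = σ_i·F for every i. -/
/-!
Write `∂ᵢ` for contraction with the `i`-th coordinate functional and `D = ∑ᵢ σᵢ ∂ᵢ` for the
number operator, which is multiplication by `k` on `⋀ᵏ`. Applying `∂ᵢ` to
`σⱼ Aᵢ + σᵢ Aⱼ = 0` and summing over `i` gives `σⱼ G = (L + 1 - D) Aⱼ` with `G = ∑ᵢ ∂ᵢ Aᵢ`.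
In degree `k + 1` this reads `σⱼ G_k = (L - k) (Aⱼ)_{k+1}`, in degree `0` it forces
`(Aⱼ)₀ = 0`, and `⋀ᵏ = 0` for `k > L`; hence `F = ∑_{k < L} (L - k)⁻¹ G_k`.
-/

open ExteriorAlgebra CliffordAlgebra

namespace ExteriorAlgebra

variable {M I : Type*} [AddCommGroup M] [Fintype I]

local notation "π" => GradedAlgebra.proj (fun k : ℕ => ⋀[_]^k _)

section CommRing

variable {R : Type*} [CommRing R] [Module R M]

noncomputable def numberOperator (b : Module.Basis I R M) :
    ExteriorAlgebra R M →ₗ[R] ExteriorAlgebra R M :=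
  ∑ i, LinearMap.mulLeft R (ι R (b i)) ∘ₗ contractLeft (b.coord i)

theorem numberOperator_apply (b : Module.Basis I R M) (x : ExteriorAlgebra R M) :
    numberOperator b x = ∑ i, ι R (b i) * contractLeft (b.coord i) x := by
  simp [numberOperator, LinearMap.sum_apply]

theorem ι_mul_ι_mul_eq_neg (u v : M) (x : ExteriorAlgebra R M) :
    ι R u * (ι R v * x) = -(ι R v * (ι R u * x)) := by
  rw [← mul_assoc, ← mul_assoc, ← neg_mul, eq_neg_of_add_eq_zero_left (ι_add_mul_swap u v)]

theorem numberOperator_ι_mul (b : Module.Basis I R M) (v : M) (x : ExteriorAlgebra R M) :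
    numberOperator b (ι R v * x) = ι R v * x + ι R v * numberOperator b x := by
  have hv : ∑ i, b.coord i v • ι R (b i) = ι R v := by
    simp_rw [← map_smul, ← map_sum, Module.Basis.coord_apply, b.sum_repr]
  simp only [numberOperator_apply, contractLeft_ι_mul, mul_sub, mul_smul_comm,
    ι_mul_ι_mul_eq_neg _ v, sub_neg_eq_add, Finset.sum_add_distrib, Finset.mul_sum]
  simp_rw [← smul_mul_assoc, ← Finset.sum_mul, hv]

theorem numberOperator_of_mem (b : Module.Basis I R M) {n : ℕ} {x : ExteriorAlgebra R M}
    (hx : x ∈ ⋀[R]^n M) : numberOperator b x = n • x := by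
  induction hx using Submodule.pow_induction_on_left' with
  | algebraMap r => simp [numberOperator_apply]
  | add x y i _ _ ihx ihy => rw [map_add, ihx, ihy, smul_add]
  | mem_mul m hm i x _ ih =>
    obtain ⟨v, rfl⟩ := hm
    rw [numberOperator_ι_mul, ih, mul_smul_comm, succ_nsmul']

theorem ι_mem_exteriorPower_one (v : M) : ι R v ∈ ⋀[R]^1 M := by
  simpa only [exteriorPower, pow_one] using LinearMap.mem_range_self _ v

theorem proj_succ_ι_mul (k : ℕ) (v : M) (x : ExteriorAlgebra R M) :
    π (k + 1) (ι R v * x) = ι R v * π k x :=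
  DirectSum.coe_decompose_mul_of_left_mem_of_le (fun k : ℕ => ⋀[R]^k M)
    (ι_mem_exteriorPower_one v) (by omega)

theorem proj_zero_ι_mul (v : M) (x : ExteriorAlgebra R M) : π 0 (ι R v * x) = 0 :=
  DirectSum.coe_decompose_mul_of_left_mem_of_not_le (fun k : ℕ => ⋀[R]^k M)
    (ι_mem_exteriorPower_one v) (by omega)

theorem proj_numberOperator (b : Module.Basis I R M) (k : ℕ) (x : ExteriorAlgebra R M) :
    π k (numberOperator b x) = k • π k x := by
  induction x using DirectSum.Decomposition.inductionOn (fun k : ℕ => ⋀[R]^k M) with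
  | zero => simp
  | add x y hx hy => simp only [map_add, hx, hy, smul_add]
  | @homogeneous n x =>
    rw [numberOperator_of_mem b x.2, map_nsmul]
    obtain rfl | hnk := eq_or_ne n k
    · rfl
    · rw [GradedAlgebra.proj_apply,
        DirectSum.decompose_of_mem_ne (fun k : ℕ => ⋀[R]^k M) x.2 hnk, smul_zero, smul_zero]

theorem ι_mul_sum_contractLeft (b : Module.Basis I R M)
    {A : I → ExteriorAlgebra R M} (h : ∀ i j, ι R (b j) * A i + ι R (b i) * A j = 0) (j : I) :
    ι R (b j) * ∑ i, contractLeft (b.coord i) (A i)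
      = (Fintype.card I + 1) • A j - numberOperator b (A j) := by
  have hi : ∀ i, (b.coord i (b j) • A i - ι R (b j) * contractLeft (b.coord i) (A i))
      + (A j - ι R (b i) * contractLeft (b.coord i) (A j)) = 0 := fun i => by
    simpa [contractLeft_ι_mul] using congrArg (contractLeft (b.coord i)) (h i j)
  have hδ : ∑ i, b.coord i (b j) • A i = A j := by
    classical
    simp [Finsupp.single_apply]
  have hsum := Finset.sum_eq_zero fun i (_ : i ∈ Finset.univ) => hi i
  rw [Finset.sum_add_distrib, Finset.sum_sub_distrib, Finset.sum_sub_distrib, hδ,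
    ← Finset.mul_sum, ← numberOperator_apply, Finset.sum_const, Finset.card_univ] at hsum
  rw [← sub_eq_zero, ← neg_eq_zero, ← hsum, succ_nsmul]
  abel

theorem ι_mul_proj_sum_contractLeft (b : Module.Basis I R M)
    {A : I → ExteriorAlgebra R M} (h : ∀ i j, ι R (b j) * A i + ι R (b i) * A j = 0)
    (j : I) (k : ℕ) :
    ι R (b j) * π k (∑ i, contractLeft (b.coord i) (A i))
      = ((Fintype.card I : R) - k) • π (k + 1) (A j) := by
  rw [← proj_succ_ι_mul, ι_mul_sum_contractLeft b h, map_sub, map_nsmul, proj_numberOperator,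
    ← Nat.cast_smul_eq_nsmul R, ← Nat.cast_smul_eq_nsmul R, ← sub_smul]
  push_cast
  ring_nf

theorem card_add_one_smul_proj_zero (b : Module.Basis I R M)
    {A : I → ExteriorAlgebra R M} (h : ∀ i j, ι R (b j) * A i + ι R (b i) * A j = 0) (j : I) :
    ((Fintype.card I : R) + 1) • π 0 (A j) = 0 := by
  have h0 := congrArg (π 0) (ι_mul_sum_contractLeft b h j)
  rwa [proj_zero_ι_mul, map_sub, map_nsmul, proj_numberOperator, zero_smul, sub_zero,
    ← Nat.cast_smul_eq_nsmul R, Nat.cast_succ, eq_comm] at h0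

end CommRing

section Field

variable {K : Type*} [Field K] [Module K M]

theorem eq_zero_of_mem_exteriorPower_of_finrank_lt [FiniteDimensional K M] {k : ℕ}
    (hk : Module.finrank K M < k) {x : ExteriorAlgebra K M} (hx : x ∈ ⋀[K]^k M) : x = 0 := by
  have hfinrank : Module.finrank K (⋀[K]^k M) = 0 := by
    rw [exteriorPower.finrank_eq, Nat.choose_eq_zero_of_lt hk]
  exact congrArg Subtype.val (finrank_zero_iff_forall_zero.1 hfinrank ⟨x, hx⟩)

theorem sum_range_proj_eq_self [FiniteDimensional K M] (x : ExteriorAlgebra K M) :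
    ∑ k ∈ Finset.range (Module.finrank K M + 1), π k x = x := by
  induction x using DirectSum.Decomposition.inductionOn (fun k : ℕ => ⋀[K]^k M) with
  | zero => simp
  | add x y hx hy => simp only [map_add, Finset.sum_add_distrib, hx, hy]
  | @homogeneous n x =>
    by_cases hn : n ≤ Module.finrank K M
    · simp only [GradedAlgebra.proj_apply]
      rw [Finset.sum_eq_single_of_mem n (Finset.mem_range_succ_iff.2 hn)
        fun k _ hk => DirectSum.decompose_of_mem_ne (fun k : ℕ => ⋀[K]^k M) x.2 hk.symm]
      exact DirectSum.decompose_of_mem_same (fun k : ℕ => ⋀[K]^k M) x.2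
    · simp [eq_zero_of_mem_exteriorPower_of_finrank_lt (not_le.1 hn) x.2]

theorem exists_eq_ι_mul_of_ι_mul_add_ι_mul_eq_zero [CharZero K] (b : Module.Basis I K M)
    {A : I → ExteriorAlgebra K M} (h : ∀ i j, ι K (b j) * A i + ι K (b i) * A j = 0) :
    ∃ F, ∀ i, A i = ι K (b i) * F := by
  have : FiniteDimensional K M := Module.Finite.of_basis b
  set N := Fintype.card I
  have hN : Module.finrank K M = N := Module.finrank_eq_card_basis b
  set G := ∑ i, contractLeft (b.coord i) (A i)
  refine ⟨∑ k ∈ Finset.range N, ((N : K) - k)⁻¹ • π k G, fun j => ?_⟩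
  have hA₀ : π 0 (A j) = 0 :=
    (smul_eq_zero.1 (card_add_one_smul_proj_zero b h j)).resolve_left (Nat.cast_add_one_ne_zero N)
  calc A j = ∑ k ∈ Finset.range (N + 1), π k (A j) := by
        rw [← hN, sum_range_proj_eq_self]
    _ = ∑ k ∈ Finset.range N, π (k + 1) (A j) := by
        rw [Finset.sum_range_succ', hA₀, add_zero]
    _ = _ := by
        rw [Finset.mul_sum]
        refine Finset.sum_congr rfl fun k hk => ?_
        have hNk : (N : K) - k ≠ 0 :=
          sub_ne_zero.2 (by exact_mod_cast (Finset.mem_range.1 hk).ne')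
        rw [mul_smul_comm, ι_mul_proj_sum_contractLeft b h, smul_smul, inv_mul_cancel₀ hNk,
          one_smul]

end Field

end ExteriorAlgebra

/-- Corollary (Lemma 2.2 of Vladimirov–Volovich, corrected):
in the exterior (Grassmann) algebra on `L` generators `σ₁,…,σ_L` over `ℝ`,
if `σ_j A_i + σ_i A_j = 0` for all `i, j`, then there is an `F` with
`A_i = σ_i F` for all `i`. -/
theorem stmt_2 (L : ℕ) (A : Fin L → ExteriorAlgebra ℝ (Fin L → ℝ))
    (σ : Fin L → ExteriorAlgebra ℝ (Fin L → ℝ))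
    (hσ : ∀ i : Fin L, σ i = ExteriorAlgebra.ι ℝ (Pi.single i (1 : ℝ)))
    (h : ∀ i j : Fin L, σ j * A i + σ i * A j = 0) :
    ∃ F : ExteriorAlgebra ℝ (Fin L → ℝ), ∀ i : Fin L, A i = σ i * F := by
  have hσ' : σ = fun i => ι ℝ (Pi.basisFun ℝ (Fin L) i) := funext fun i => by simp [hσ]
  subst hσ'
  exact exists_eq_ι_mul_of_ι_mul_add_ι_mul_eq_zero _ h
end

section
/- Let X and Y be Fréchet spaces (complete metrizable locally convex topological vector spaces), U ⊆ X open, and f : U → Y. Suppose f has a Gâteaux derivative f'(x)y at every x ∈ U which is linear in y and such that the map (x,y) ↦ f'(x)y is jointly continuous from U × X to Y. Then f is Fréchet differentiable on U in the sense of Schwartz: for each x ∈ U, the remainder φ(y) = f(x+y) − f(x) − f'(x)y is horizontal at 0, i.e., for every continuous seminorm q on Y and ε > 0 there exist a continuous seminorm p on X and δ > 0 such that q(φ(ty)) ≤ ε|t| whenever p(y) < 1 and |t| ≤ δ. -/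
/-!
Fix `x ∈ U` and write `g(s) = f(x + s t y) - s f'(x)(t y)`. Its derivative is
`f'(x + s t y)(t y) - f'(x)(t y) = t (f'(x + s t y) y - f'(x) y)`, and joint continuity of
`f'` at `(x, 0)` gives an absolutely convex neighbourhood `V` of `0` on which
`q (f'(x + v) w - f'(x) w) < ε` for `v, w ∈ V`. Taking `p` the gauge of `V` and `δ = 1`,
a mean value inequality for the seminorm `q` bounds `q (g 1 - g 0)` by `ε |t|`; it is
proved by applying the real mean value inequality to `s ↦ q (g s - g 0)`.
-/

open Filter Topology Set

section SlopeInTVS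

variable {Y : Type*} [AddCommGroup Y] [Module ℝ Y] [TopologicalSpace Y]
  {g : ℝ → Y} {s : ℝ} {L : Y}

theorem Seminorm.eventually_div_lt_of_tendsto_slope (q : Seminorm ℝ Y)
    (hq : Continuous fun v => q v)
    (hg : Tendsto (fun h : ℝ => h⁻¹ • (g (s + h) - g s)) (𝓝[≠] 0) (𝓝 L))
    {r : ℝ} (hr : q L < r) : ∀ᶠ z in 𝓝[>] s, q (g z - g s) / (z - s) < r := by
  have hshift : Tendsto (fun z : ℝ => z - s) (𝓝[>] s) (𝓝[≠] 0) := by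
    refine tendsto_nhdsWithin_of_tendsto_nhds_of_eventually_within _ ?_ ?_
    · simpa using ((continuous_sub_right s).tendsto s).mono_left nhdsWithin_le_nhds
    · filter_upwards [self_mem_nhdsWithin] with z hz
      exact sub_ne_zero.2 (ne_of_gt hz)
  filter_upwards [((hq.tendsto L).comp (hg.comp hshift)) (Iio_mem_nhds hr),
    self_mem_nhdsWithin] with z hz hsz
  have hpos : 0 < z - s := sub_pos.2 hsz
  simpa [map_smul_eq_mul, abs_of_pos hpos, inv_mul_eq_div] using hz

variable [IsTopologicalAddGroup Y] [ContinuousSMul ℝ Y]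

theorem continuousAt_of_tendsto_slope
    (hg : Tendsto (fun h : ℝ => h⁻¹ • (g (s + h) - g s)) (𝓝[≠] 0) (𝓝 L)) :
    ContinuousAt g s := by
  have hsmul : Tendsto (fun h : ℝ => h • (h⁻¹ • (g (s + h) - g s))) (𝓝[≠] 0) (𝓝 0) := by
    simpa using (tendsto_nhdsWithin_of_tendsto_nhds tendsto_id).smul hg
  have hincr : Tendsto (fun h : ℝ => g (s + h) - g s) (𝓝[≠] 0) (𝓝 0) := by
    refine hsmul.congr' ?_
    filter_upwards [self_mem_nhdsWithin] with h hh
    exact smul_inv_smul₀ hh _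
  have hincr0 : ContinuousAt (fun h : ℝ => g (s + h) - g s) 0 := by
    rw [continuousAt_iff_punctured_nhds]
    simpa using hincr
  rw [ContinuousAt, ← map_add_left_nhds_zero s, tendsto_map'_iff]
  simpa [Function.comp_def] using hincr0.tendsto.add_const (g s)

theorem Seminorm.map_sub_le_of_tendsto_slope {g' : ℝ → Y} (q : Seminorm ℝ Y)
    (hq : Continuous fun v => q v) {M : ℝ}
    (hg : ∀ s ∈ Icc (0 : ℝ) 1,
      Tendsto (fun h : ℝ => h⁻¹ • (g (s + h) - g s)) (𝓝[≠] 0) (𝓝 (g' s)))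
    (hM : ∀ s ∈ Icc (0 : ℝ) 1, q (g' s) ≤ M) : q (g 1 - g 0) ≤ M := by
  have hgc : ContinuousOn g (Icc 0 1) := fun s hs =>
    (continuousAt_of_tendsto_slope (hg s hs)).continuousWithinAt
  have key : ∀ z ∈ Icc (0 : ℝ) 1, q (g z - g 0) ≤ M * z := by
    refine image_le_of_liminf_slope_right_le_deriv_boundary (B' := fun _ => M)
      (hq.comp_continuousOn (hgc.sub continuousOn_const)) (by simp)
      (continuous_const_mul M).continuousOn
      (fun s _ => by simpa using ((hasDerivAt_id s).const_mul M).hasDerivWithinAt) ?_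
    intro s hs r hr
    have hs' : s ∈ Icc (0 : ℝ) 1 := Ico_subset_Icc_self hs
    refine ((q.eventually_div_lt_of_tendsto_slope hq (hg s hs')
      ((hM s hs').trans_lt hr)).and self_mem_nhdsWithin).frequently.mono ?_
    rintro z ⟨hz, hsz⟩
    have hincr : q (g z - g 0) - q (g s - g 0) ≤ q (g z - g s) := by
      have := map_add_le_add q (g z - g s) (g s - g 0)
      rw [sub_add_sub_cancel] at this
      linarith
    rw [slope_def_field]
    exact (div_le_div_of_nonneg_right hincr (sub_pos.2 hsz).le).trans_lt hz
  simpa using key 1 ⟨zero_le_one, le_rfl⟩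

end SlopeInTVS

section Gateaux

variable {X Y : Type*} [AddCommGroup X] [Module ℝ X]
  [AddCommGroup Y] [Module ℝ Y] [TopologicalSpace Y]

def HasGateauxDerivOn (f : X → Y) (f' : X → X → Y) (U : Set X) : Prop :=
  ∀ x ∈ U, ∀ y : X,
    Tendsto (fun t : ℝ => t⁻¹ • (f (x + t • y) - f x)) (𝓝[≠] 0) (𝓝 (f' x y))

theorem HasGateauxDerivOn.seminorm_sub_sub_le [IsTopologicalAddGroup Y] [ContinuousSMul ℝ Y]
    {U : Set X} {f : X → Y} {f' : X → X → Y} (hG : HasGateauxDerivOn f f' U)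
    (q : Seminorm ℝ Y) (hq : Continuous fun v => q v) {x v : X} {M : ℝ}
    (hseg : ∀ s ∈ Icc (0 : ℝ) 1, x + s • v ∈ U)
    (hM : ∀ s ∈ Icc (0 : ℝ) 1, q (f' (x + s • v) v - f' x v) ≤ M) :
    q (f (x + v) - f x - f' x v) ≤ M := by
  have hslope : ∀ s ∈ Icc (0 : ℝ) 1,
      Tendsto (fun h : ℝ => h⁻¹ • ((f (x + (s + h) • v) - (s + h) • f' x v) -
        (f (x + s • v) - s • f' x v))) (𝓝[≠] 0) (𝓝 (f' (x + s • v) v - f' x v)) := by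
    intro s hs
    refine ((hG _ (hseg s hs) v).sub_const (f' x v)).congr' ?_
    filter_upwards [self_mem_nhdsWithin] with h hh
    rw [add_smul, add_smul, ← add_assoc]
    have hcancel : h⁻¹ • h • f' x v = f' x v := inv_smul_smul₀ hh _
    simp only [smul_sub, smul_add, hcancel]
    abel
  simpa [sub_right_comm] using
    q.map_sub_le_of_tendsto_slope (g := fun s => f (x + s • v) - s • f' x v) hq hslope hM

end Gateaux

theorem exists_absConvex_nhds_zero_seminorm_apply_sub_lt
    {X Y : Type*} [AddCommGroup X] [Module ℝ X] [TopologicalSpace X]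
    [IsTopologicalAddGroup X] [ContinuousSMul ℝ X] [LocallyConvexSpace ℝ X]
    [AddCommGroup Y] [Module ℝ Y] [TopologicalSpace Y]
    {U : Set X} (hU : IsOpen U) {f' : X → X →ₗ[ℝ] Y}
    (hcont : ContinuousOn (fun p : X × X => f' p.1 p.2) (U ×ˢ univ))
    {x : X} (hx : x ∈ U) (q : Seminorm ℝ Y) (hq : Continuous fun v => q v)
    {ε : ℝ} (hε : 0 < ε) :
    ∃ V ∈ 𝓝 (0 : X), AbsConvex ℝ V ∧
      ∀ v ∈ V, x + v ∈ U ∧ ∀ w ∈ V, q (f' (x + v) w - f' x w) < ε := by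
  set S : Set (X × X) := {a | a.1 ∈ U ∧ q (f' a.1 a.2) < ε / 2}
  have hS : S ∈ 𝓝 (x, 0) := by
    have hqf : ContinuousAt (fun a : X × X => q (f' a.1 a.2)) (x, 0) :=
      hq.continuousAt.comp <| hcont.continuousAt <|
        (hU.prod isOpen_univ).mem_nhds ⟨hx, trivial⟩
    exact inter_mem (continuous_fst.continuousAt.preimage_mem_nhds (hU.mem_nhds hx))
      (hqf.preimage_mem_nhds (Iio_mem_nhds (by simpa using half_pos hε)))
  have hshift : Tendsto (fun a : X × X => (x + a.1, a.2)) (𝓝 (0, 0)) (𝓝 (x, 0)) := by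
    simpa using ((continuous_const.add continuous_fst).prodMk continuous_snd).tendsto
      ((0 : X), (0 : X))
  obtain ⟨A, hA, B, hB, hAB⟩ := mem_nhds_prod_iff.1 (hshift hS)
  obtain ⟨V, ⟨hV, hVconv⟩, hVsub⟩ :=
    (nhds_hasBasis_absConvex ℝ X).mem_iff.1 (inter_mem hA hB)
  have hV0 : (0 : X) ∈ V := mem_of_mem_nhds hV
  have hVS : ∀ v ∈ V, ∀ w ∈ V, x + v ∈ U ∧ q (f' (x + v) w) < ε / 2 := fun v hv w hw =>
    hAB (mk_mem_prod (hVsub hv).1 (hVsub hw).2)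
  refine ⟨V, hV, hVconv, fun v hv => ⟨(hVS v hv v hv).1, fun w hw => ?_⟩⟩
  have hvw := (hVS v hv w hw).2
  have h0w : q (f' x w) < ε / 2 := by simpa using (hVS 0 hV0 w hw).2
  linarith [map_sub_le_add q (f' (x + v) w) (f' x w)]

theorem stmt_10_general {X Y : Type*}
    [AddCommGroup X] [Module ℝ X] [UniformSpace X] [IsUniformAddGroup X]
    [ContinuousSMul ℝ X] [LocallyConvexSpace ℝ X]
    [AddCommGroup Y] [Module ℝ Y] [UniformSpace Y] [IsUniformAddGroup Y]
    [ContinuousSMul ℝ Y]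
    (U : Set X) (hU : IsOpen U) (f : X → Y) (f' : X → X →ₗ[ℝ] Y)
    (hG : ∀ x ∈ U, ∀ y : X,
      Tendsto (fun t : ℝ => t⁻¹ • (f (x + t • y) - f x)) (𝓝[≠] 0) (𝓝 (f' x y)))
    (hcont : ContinuousOn (fun p : X × X => f' p.1 p.2) (U ×ˢ Set.univ)) :
    ∀ x ∈ U, ∀ q : Seminorm ℝ Y, Continuous (fun v => q v) → ∀ ε > 0,
      ∃ p : Seminorm ℝ X, Continuous (fun v => p v) ∧ ∃ δ > 0, ∀ y : X, p y < 1 →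
        ∀ t : ℝ, |t| ≤ δ → q (f (x + t • y) - f x - f' x (t • y)) ≤ ε * |t| := by
  intro x hx q hq ε hε
  obtain ⟨V, hV, ⟨hVbal, hVconv⟩, hVf'⟩ :=
    exists_absConvex_nhds_zero_seminorm_apply_sub_lt hU hcont hx q hq hε
  have hVabs : Absorbent ℝ V := absorbent_nhds_zero hV
  refine ⟨gaugeSeminorm hVbal hVconv hVabs, continuous_gauge hVconv hV, 1, one_pos,
    fun y hy t ht => ?_⟩
  have hyV : y ∈ V := setOfPred_gauge_lt_one_subset_self hVconv (mem_of_mem_nhds hV) hVabs hy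
  have hsty : ∀ s ∈ Icc (0 : ℝ) 1, s • t • y ∈ V := fun s hs => by
    rw [smul_smul]
    refine hVbal.smul_mem ?_ hyV
    rw [Real.norm_eq_abs, abs_mul, abs_of_nonneg hs.1]
    exact mul_le_one₀ hs.2 (abs_nonneg t) ht
  refine HasGateauxDerivOn.seminorm_sub_sub_le (f' := fun a w => f' a w) hG q hq
    (fun s hs => (hVf' _ (hsty s hs)).1) fun s hs => ?_
  rw [map_smul, map_smul, ← smul_sub, map_smul_eq_mul, Real.norm_eq_abs, mul_comm ε]
  exact mul_le_mul_of_nonneg_left ((hVf' _ (hsty s hs)).2 y hyV).le (abs_nonneg t)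

/-- Schwartz-type Fréchet differentiability from continuous Gâteaux
differentiability in Fréchet spaces.  If `f : U → Y` has a Gâteaux derivative
`f'(x)y` at every `x ∈ U`, linear in `y`, with `(x,y) ↦ f'(x)y` jointly
continuous, then for each `x ∈ U` the remainder
`φ(y) = f(x+y) − f(x) − f'(x)y` is horizontal at `0`: for every continuous
seminorm `q` on `Y` and `ε > 0` there are a continuous seminorm `p` on `X` and
`δ > 0` with `q(φ(ty)) ≤ ε|t|` whenever `p(y) < 1` and `|t| ≤ δ`. -/
theorem stmt_10 {X Y : Type*}
    [AddCommGroup X] [Module ℝ X] [UniformSpace X] [IsUniformAddGroup X]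
    [ContinuousSMul ℝ X] [LocallyConvexSpace ℝ X] [CompleteSpace X]
    [TopologicalSpace.PseudoMetrizableSpace X]
    [AddCommGroup Y] [Module ℝ Y] [UniformSpace Y] [IsUniformAddGroup Y]
    [ContinuousSMul ℝ Y] [LocallyConvexSpace ℝ Y] [CompleteSpace Y]
    [TopologicalSpace.PseudoMetrizableSpace Y]
    (U : Set X) (hU : IsOpen U) (f : X → Y) (f' : X → X →ₗ[ℝ] Y)
    (hG : ∀ x ∈ U, ∀ y : X,
      Tendsto (fun t : ℝ => t⁻¹ • (f (x + t • y) - f x)) (𝓝[≠] 0) (𝓝 (f' x y)))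
    (hcont : ContinuousOn (fun p : X × X => f' p.1 p.2) (U ×ˢ Set.univ)) :
    ∀ x ∈ U, ∀ q : Seminorm ℝ Y, Continuous (fun v => q v) → ∀ ε > 0,
      ∃ p : Seminorm ℝ X, Continuous (fun v => p v) ∧ ∃ δ > 0, ∀ y : X, p y < 1 →
        ∀ t : ℝ, |t| ≤ δ → q (f (x + t • y) - f x - f' x (t • y)) ≤ ε * |t| :=
  stmt_10_general U hU f f' hG hcont
end

section
/- In the Fréchet–Grassmann algebra ℭ on countably many generators (topologized as the product topology on coefficients), a polynomial-in-odd-variables expression is unique: if Σ_{a ∈ {0,1}^n} θ^a f_a = 0 in ℭ for all odd n-tuples θ = (θ₁,…,θ_n) ∈ Λ_od^n, where f_a ∈ ℭ, then f_a = 0 for every multi-index a. -/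
/-!
Splitting off the first variable writes the expansion as `g₀(θ') + θ₁ g₁(θ')`, where `g₀, g₁` are
expansions in the remaining `n - 1` odd variables. Taking `θ₁ = 0` and using induction gives that
the coefficients of `g₀` vanish; then `ξ g₁(θ') = 0` for every generator `ξ`. Since an element of
the Grassmann algebra involves only finitely many generators, contracting `ξ g₁(θ')` with the
coordinate functional of a generator `ξ` not occurring in `g₁(θ')` recovers `g₁(θ')`, so
`g₁(θ') = 0` for all odd `θ'`, and induction applies again.
-/

/-- The Grassmann algebra on countably many generators over `ℂ`. -/
noncomputable abbrev LamC := ExteriorAlgebra ℂ (ℕ →₀ ℂ)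

/-- The degree-one part. -/
noncomputable def genRC : Submodule ℂ LamC :=
  LinearMap.range (ExteriorAlgebra.ι ℂ (M := ℕ →₀ ℂ))

/-- The odd part. -/
noncomputable def odPC : Submodule ℂ LamC := ⨆ n : ℕ, genRC ^ (2 * n + 1)

/-- The odd monomial `θ^a = θ₁^{a₁}⋯θ_n^{a_n}` for `a ∈ {0,1}^n`. -/
noncomputable def oddMono (n : ℕ) (θ : Fin n → LamC) (a : Fin n → Bool) : LamC :=
  (List.ofFn fun k => if a k then θ k else 1).prod

open CliffordAlgebra

namespace ExteriorAlgebra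

variable {R κ : Type*} [CommRing R]

theorem exists_finset_contractLeft_lapply_eq_zero (x : ExteriorAlgebra R (κ →₀ R)) :
    ∃ s : Finset κ, ∀ j ∉ s, contractLeft (Finsupp.lapply j) x = 0 := by
  classical
  induction x using CliffordAlgebra.left_induction with
  | algebraMap r => exact ⟨∅, fun j _ => contractLeft_algebraMap _ _ r⟩
  | add x y hx hy =>
    obtain ⟨s, hs⟩ := hx
    obtain ⟨t, ht⟩ := hy
    refine ⟨s ∪ t, fun j hj => ?_⟩
    rw [Finset.notMem_union] at hj
    rw [map_add, hs j hj.1, ht j hj.2, add_zero]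
  | ι_mul x v hx =>
    obtain ⟨s, hs⟩ := hx
    refine ⟨s ∪ v.support, fun j hj => ?_⟩
    rw [Finset.notMem_union, Finsupp.notMem_support_iff] at hj
    rw [contractLeft_ι_mul, Finsupp.lapply_apply, hj.2, hs j hj.1, zero_smul, mul_zero, sub_zero]

theorem eq_zero_of_forall_ι_single_mul_eq_zero [Infinite κ] {x : ExteriorAlgebra R (κ →₀ R)}
    (hx : ∀ i, ι R (Finsupp.single i 1) * x = 0) : x = 0 := by
  obtain ⟨s, hs⟩ := exists_finset_contractLeft_lapply_eq_zero x
  obtain ⟨j, hj⟩ := s.exists_notMem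
  have := contractLeft_ι_mul (Q := 0) (Finsupp.lapply j) (Finsupp.single j (1 : R)) x
  rwa [← ExteriorAlgebra.ι, hx j, map_zero, hs j hj, mul_zero, sub_zero, Finsupp.lapply_apply,
    Finsupp.single_eq_same, one_smul, eq_comm] at this

end ExteriorAlgebra

theorem ι_mem_odPC (v : ℕ →₀ ℂ) : ExteriorAlgebra.ι ℂ v ∈ odPC :=
  le_iSup (fun n : ℕ => genRC ^ (2 * n + 1)) 0 (by simp [genRC])

theorem oddMono_succ (n : ℕ) (θ : Fin (n + 1) → LamC) (a : Fin (n + 1) → Bool) :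
    oddMono (n + 1) θ a = (if a 0 then θ 0 else 1) * oddMono n (Fin.tail θ) (Fin.tail a) := by
  rw [oddMono, List.ofFn_succ, List.prod_cons]
  rfl

theorem sum_oddMono_mul_succ (n : ℕ) (θ : Fin (n + 1) → LamC) (f : (Fin (n + 1) → Bool) → LamC) :
    ∑ a, oddMono (n + 1) θ a * f a =
      ∑ a, oddMono n (Fin.tail θ) a * f (Fin.cons false a) +
        θ 0 * ∑ a, oddMono n (Fin.tail θ) a * f (Fin.cons true a) := by
  rw [← (Fin.consEquiv fun _ => Bool).sum_comp, Fintype.sum_prod_type, Fintype.sum_bool,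
    add_comm, Finset.mul_sum]
  simp [Fin.consEquiv, oddMono_succ, mul_assoc]

/-- Uniqueness of the superfield expansion in the Grassmann algebra with
countably many generators: if `Σ_{a ∈ {0,1}^n} θ^a f_a = 0` for all odd
`n`-tuples `θ`, then every coefficient `f_a` vanishes. -/
theorem stmt_17 (n : ℕ) (f : (Fin n → Bool) → LamC)
    (h : ∀ θ : Fin n → LamC, (∀ k, θ k ∈ odPC) →
      (∑ a : Fin n → Bool, oddMono n θ a * f a) = 0) :
    ∀ a : Fin n → Bool, f a = 0 := by
  induction n with
  | zero =>
    intro a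
    simpa [oddMono] using (Fintype.sum_subsingleton _ a).symm.trans (h 0 finZeroElim)
  | succ n ih =>
    have h_cons (t : LamC) (ht : t ∈ odPC) (θ : Fin n → LamC) (hθ : ∀ k, θ k ∈ odPC) :
        ∑ a, oddMono n θ a * f (Fin.cons false a) +
          t * ∑ a, oddMono n θ a * f (Fin.cons true a) = 0 := by
      simpa [sum_oddMono_mul_succ] using h (Fin.cons t θ) (Fin.forall_fin_succ.2 ⟨ht, hθ⟩)
    have h_false : ∀ a, f (Fin.cons false a) = 0 :=
      ih _ fun θ hθ => by simpa using h_cons 0 odPC.zero_mem θ hθ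
    have h_true : ∀ a, f (Fin.cons true a) = 0 :=
      ih _ fun θ hθ => ExteriorAlgebra.eq_zero_of_forall_ι_single_mul_eq_zero fun m => by
        simpa [h_false] using h_cons _ (ι_mem_odPC (Finsupp.single m 1)) θ hθ
    intro a
    rw [← Fin.cons_self_tail a]
    cases a 0
    exacts [h_false _, h_true _]
end
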